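/- arXiv:1012.4964 — 4 statements merged into one kernel-verified Lean document; each statement's English description precedes it below -/
import Mathlib

section
/- On a pseudo-Hermitian vector space (V,⟨·,·⟩,J), the map π₁H(x,y;z) := (1/6){H(x,y;z)+H(y,z;x)+H(z,x;y) − H(x,Jy;Jz) − H(y,Jz;Jx) − H(z,Jx;Jy)} is a projection from 𝔥₋ onto W₁,₋ := {H ∈ 𝔥₋ : H(x,y;z) + H(x,z;y) = 0 for all x,y,z}, i.e., π₁ maps 𝔥₋ into W₁,₋, and π₁ restricted to W₁,₋ is the identity. -/
/-- The map `π₁` on 3-tensors of a pseudo-Hermitian vector space. -/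
noncomputable def piOne {V : Type*} [AddCommGroup V] [Module ℝ V] (J : V →ₗ[ℝ] V)
    (H : V →ₗ[ℝ] V →ₗ[ℝ] V →ₗ[ℝ] ℝ) (x y z : V) : ℝ :=
  (1/6) * (H x y z + H y z x + H z x y
    - H x (J y) (J z) - H y (J z) (J x) - H z (J x) (J y))

/-- `π₁` is a projection from `𝔥₋` onto `W₁,₋`: for `H ∈ 𝔥₋`, `π₁H` again lies in `𝔥₋`
and satisfies `π₁H(x,y;z) + π₁H(x,z;y) = 0`; and if `H ∈ W₁,₋` then `π₁H = H`. -/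
theorem stmt_7 {V : Type*} [AddCommGroup V] [Module ℝ V]
    (B : V →ₗ[ℝ] V →ₗ[ℝ] ℝ) (J : V →ₗ[ℝ] V)
    (hBsymm : ∀ x y, B x y = B y x)
    (hBnd : ∀ x, (∀ y, B x y = 0) → x = 0)
    (hJ2 : ∀ x, J (J x) = -x)
    (hJB : ∀ x y, B (J x) (J y) = B x y)
    (H : V →ₗ[ℝ] V →ₗ[ℝ] V →ₗ[ℝ] ℝ)
    (hH1 : ∀ x y z, H x y z = - H y x z)
    (hH2 : ∀ x y z, H (J x) (J y) z = - H x y z) :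
    ((∀ x y z, piOne J H x y z = - piOne J H y x z) ∧
     (∀ x y z, piOne J H (J x) (J y) z = - piOne J H x y z) ∧
     (∀ x y z, piOne J H x y z + piOne J H x z y = 0)) ∧
    ((∀ x y z, H x y z + H x z y = 0) → ∀ x y z, piOne J H x y z = H x y z) := by
  -- J can be moved between the first two slots
  have hmove : ∀ x y z, H (J x) y z = H x (J y) z := by
    intro x y z
    have h := hH2 x (J y) z
    rw [hJ2 y] at h
    simp only [map_neg, LinearMap.neg_apply] at h
    linarith
  -- antisymmetry with J in the second slot
  have h3 : ∀ x y z, H x (J y) z = - H y (J x) z := by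
    intro x y z
    rw [← hmove, hH1]
  refine ⟨⟨?_, ?_, ?_⟩, ?_⟩
  · intro x y z
    simp only [piOne]
    linarith [hH1 x y z, hH1 y z x, hH1 z x y,
      h3 x y (J z), h3 y z (J x), h3 z x (J y)]
  · intro x y z
    simp only [piOne, hJ2, map_neg, LinearMap.neg_apply]
    linarith [hH2 x y z, hmove y z (J x), hmove x y (J z), hH2 y z x]
  · intro x y z
    simp only [piOne]
    linarith [hH1 x y z, hH1 y z x, hH1 z x y,
      h3 x y (J z), h3 x z (J y), h3 y z (J x)]
  · intro hs x y z
    -- cyclic symmetry from full antisymmetry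
    have hc : ∀ x y z, H y z x = H x y z := by
      intro x y z
      linarith [hs y z x, hH1 x y z, hH1 y x z]
    -- J-terms
    have h4 : ∀ x y z, H x (J y) (J z) = - H x y z := by
      intro x y z
      have a1 := hmove x y (J z)
      have a2 := hs (J x) y (J z)
      have a3 := hH2 x z y
      have a4 := hs x y z
      linarith
    simp only [piOne]
    linarith [hc x y z, hc y z x, h4 x y z, h4 y z x, h4 z x y]
end

section
/- On a pseudo-Hermitian vector space, W₁,₋ ⊆ ker(π₃): if H ∈ 𝔥₋ satisfies H(x,y;z) + H(x,z;y) = 0 for all x,y,z, then H(x,y;z) + H(x,Jy;Jz) = 0 for all x,y,z. -/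
/-- On a pseudo-Hermitian vector space, `W₁,₋ ⊆ ker(π₃)`: if `H ∈ 𝔥₋` satisfies
`H(x,y;z) + H(x,z;y) = 0`, then `H(x,y;z) + H(x,Jy;Jz) = 0`. -/
theorem stmt_13 {V : Type*} [AddCommGroup V] [Module ℝ V]
    (B : V →ₗ[ℝ] V →ₗ[ℝ] ℝ) (J : V →ₗ[ℝ] V)
    (hBsymm : ∀ x y, B x y = B y x)
    (hBnd : ∀ x, (∀ y, B x y = 0) → x = 0)
    (hJ2 : ∀ x, J (J x) = -x)
    (hJB : ∀ x y, B (J x) (J y) = B x y)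
    (H : V →ₗ[ℝ] V →ₗ[ℝ] V →ₗ[ℝ] ℝ)
    (hH1 : ∀ x y z, H x y z = - H y x z)
    (hH2 : ∀ x y z, H (J x) (J y) z = - H x y z)
    (hW1 : ∀ x y z, H x y z + H x z y = 0) :
    ∀ x y z, H x y z + H x (J y) (J z) = 0 := by
  intro x y z
  have cyc : ∀ a b c, H a b c = H b c a := fun a b c => by
    have h1 := hH1 a b c
    have h2 := hW1 b a c
    linarith
  have h3 := hH2 y z x
  have h4 := cyc x (J y) (J z)
  have h5 := cyc x y z
  linarith
end

section
/- On a pseudo-Hermitian vector space, W₂,₋ ⊆ ker(π₃): if H ∈ 𝔥₋ satisfies the cyclic identity H(x,y;z) + H(y,z;x) + H(z,x;y) = 0 for all x,y,z, then H(x,y;z) + H(x,Jy;Jz) = 0 for all x,y,z. -/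
/-- On a pseudo-Hermitian vector space, `W₂,₋ ⊆ ker(π₃)`: if `H ∈ 𝔥₋` satisfies
the cyclic identity, then `H(x,y;z) + H(x,Jy;Jz) = 0`. -/
theorem stmt_14 {V : Type*} [AddCommGroup V] [Module ℝ V]
    (B : V →ₗ[ℝ] V →ₗ[ℝ] ℝ) (J : V →ₗ[ℝ] V)
    (hBsymm : ∀ x y, B x y = B y x)
    (hBnd : ∀ x, (∀ y, B x y = 0) → x = 0)
    (hJ2 : ∀ x, J (J x) = -x)
    (hJB : ∀ x y, B (J x) (J y) = B x y)
    (H : V →ₗ[ℝ] V →ₗ[ℝ] V →ₗ[ℝ] ℝ)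
    (hH1 : ∀ x y z, H x y z = - H y x z)
    (hH2 : ∀ x y z, H (J x) (J y) z = - H x y z)
    (hW2 : ∀ x y z, H x y z + H y z x + H z x y = 0) :
    ∀ x y z, H x y z + H x (J y) (J z) = 0 := by
  -- Step 1: H (J a) b c = H a (J b) c
  have hstar : ∀ a b c, H (J a) b c = H a (J b) c := by
    intro a b c
    have h := hH2 a (J b) c
    rw [hJ2 b] at h
    simp only [map_neg, LinearMap.neg_apply] at h
    linarith
  -- Step 2: G(a,b,c) := H a (J b) (J c) satisfies the cyclic identity
  have hGcyc : ∀ a b c,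
      H a (J b) (J c) + H b (J c) (J a) + H c (J a) (J b) = 0 := by
    intro a b c
    have e1 := hW2 a b c
    have e2 := hW2 (J a) (J b) c
    have e3 := hW2 a (J b) (J c)
    have e4 := hW2 (J a) b (J c)
    have c1 := hH2 a b c
    have c2 := hstar b c (J a)
    have c3 := hH2 b c a
    have c4 := hstar c a (J b)
    have c5 := hstar a b (J c)
    have c6 := hH2 c a b
    linarith
  -- Step 3: apply the cyclic identity for G at (z, Jx, Jy)
  intro x y z
  have h := hGcyc z (J x) (J y)
  rw [hJ2 x, hJ2 y] at h
  simp only [map_neg, LinearMap.neg_apply, neg_neg] at h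
  have d1 := hstar x y (J z)
  have d2 := hH2 y z x
  have e := hW2 x y z
  linarith
end

section
/- Let (V,⟨·,·⟩) be a real inner product space of signature (p,q) and ξ ⊆ ⊗^k V* a subspace invariant under pull-back by all isometries of ⟨·,·⟩ that commute or anticommute with a fixed pseudo-Hermitian structure J (the group 𝒰*). Then the canonical extension of ⟨·,·⟩ to ⊗^k V* restricts to a nondegenerate form on ξ. -/
/-!
Choose a positive definite inner product invariant under `J` and let `S` be the self-adjoint
operator representing `B`, so that `S` commutes with `J`. In an orthonormal eigenbasis of `S`,
the sign `σ = sign S` is an isometry of `B` commuting with `J` (so `σ ∈ 𝒰*`), and the eigenbasis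
is orthogonal for `B(·, σ ·)` with the positive weights `|μᵢ|`. Hence the form `Bk(·, σ^{⊗k} ·)`
has the tensor-product basis as an orthogonal basis with positive weights, so it is positive
definite. If `t ∈ ξ` is `Bk`-orthogonal to `ξ`, then `σ^{⊗k} t ∈ ξ` gives
`Bk(t, σ^{⊗k} t) = 0`, hence `t = 0`.
-/

open Module
open scoped TensorProduct RealInnerProductSpace

section Diagonal

variable {R M ι : Type*} [CommRing R] [AddCommGroup M] [Module R M] (b : Basis ι R M)

noncomputable def Module.Basis.diagonal (d : ι → R) : M →ₗ[R] M :=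
  b.constr R fun i => d i • b i

@[simp]
theorem Module.Basis.diagonal_apply_self (d : ι → R) (i : ι) : b.diagonal d (b i) = d i • b i :=
  b.constr_basis _ _ _

theorem Module.Basis.repr_apply_of_apply_eq_smul {D : M →ₗ[R] M} {d : ι → R}
    (hD : ∀ j, D (b j) = d j • b j) (v : M) (i : ι) : b.repr (D v) i = d i * b.repr v i := by
  classical
  have : b.coord i ∘ₗ D = d i • b.coord i := b.ext fun j => by
    by_cases h : j = i
    · simp [hD, h]
    · simp [hD, Ne.symm h]
  exact LinearMap.congr_fun this v

variable [NoZeroDivisors R] {S : M →ₗ[R] M} {μ : ι → R}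

theorem Module.Basis.diagonal_comp_apply_of_apply_eq_smul (hS : ∀ i, S (b i) = μ i • b i)
    (φ : R → R) {v : M} {c : R} (hv : S v = c • v) : b.diagonal (φ ∘ μ) v = φ c • v := by
  refine b.ext_elem fun i => ?_
  have hcoord : (μ i - c) * b.repr v i = 0 := by
    rw [sub_mul, ← b.repr_apply_of_apply_eq_smul hS, hv, map_smul, Finsupp.smul_apply,
      smul_eq_mul, sub_self]
  rw [b.repr_apply_of_apply_eq_smul (b.diagonal_apply_self _), map_smul, Finsupp.smul_apply,
    smul_eq_mul, Function.comp_apply]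
  rcases mul_eq_zero.mp hcoord with h | h
  · rw [sub_eq_zero.mp h]
  · simp [h]

theorem Module.Basis.commute_diagonal_comp (hS : ∀ i, S (b i) = μ i • b i) (φ : R → R)
    {T : M →ₗ[R] M} (hT : Commute T S) : Commute T (b.diagonal (φ ∘ μ)) :=
  b.ext fun i => by
    simp only [Module.End.mul_apply, b.diagonal_apply_self, map_smul]
    rw [b.diagonal_comp_apply_of_apply_eq_smul hS φ (by rw [← Module.End.mul_apply, ← hT.eq,
      Module.End.mul_apply, hS, map_smul]), Function.comp_apply]

end Diagonal

section SignDiagonal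

variable {K M ι : Type*} [Field K] [LinearOrder K] [AddCommGroup M] [Module K M]
  (b : Basis ι K M)

noncomputable def Module.Basis.signDiagonal (μ : ι → K) : M →ₗ[K] M :=
  b.diagonal ((fun x => (SignType.sign x : K)) ∘ μ)

@[simp]
theorem Module.Basis.signDiagonal_apply_self (μ : ι → K) (i : ι) :
    b.signDiagonal μ (b i) = (SignType.sign (μ i) : K) • b i :=
  b.diagonal_apply_self _ _

variable [IsStrictOrderedRing K] [DecidableEq ι] {B : M →ₗ[K] M →ₗ[K] K} {μ : ι → K}

theorem Module.Basis.apply_signDiagonal_signDiagonal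
    (hB : ∀ i j, B (b i) (b j) = if i = j then μ i else 0) (x y : M) :
    B (b.signDiagonal μ x) (b.signDiagonal μ y) = B x y := by
  have : (B ∘ₗ b.signDiagonal μ).compl₂ (b.signDiagonal μ) = B :=
    LinearMap.ext_basis b b fun i j => by
      by_cases h : i = j
      · subst h; simp [hB]
      · simp [hB, h]
  exact LinearMap.congr_fun₂ this x y

theorem Module.Basis.apply_basis_signDiagonal_basis
    (hB : ∀ i j, B (b i) (b j) = if i = j then μ i else 0) (i j : ι) :
    B (b i) (b.signDiagonal μ (b j)) = if i = j then |μ i| else 0 := by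
  by_cases h : i = j
  · subst h; simp [hB, mul_comm, self_mul_sign]
  · simp [hB, h]

end SignDiagonal

section PositiveBasis

variable {K M ι : Type*} [Field K] [LinearOrder K] [IsStrictOrderedRing K] [AddCommGroup M]
  [Module K M] [Fintype ι] [DecidableEq ι] {G : M →ₗ[K] M →ₗ[K] K} {c : ι → K}

theorem LinearMap.apply_self_pos_of_basis (b : Basis ι K M) (hc : ∀ i, 0 < c i)
    (hG : ∀ i j, G (b i) (b j) = if i = j then c i else 0) {x : M} (hx : x ≠ 0) :
    0 < G x x := by
  have hexp : G x x = ∑ i, c i * b.repr x i ^ 2 := by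
    conv_lhs => rw [← b.sum_repr x]
    simp only [map_sum, map_smul, LinearMap.sum_apply, LinearMap.smul_apply, hG, smul_eq_mul,
      mul_ite, mul_zero, Finset.sum_ite_eq', Finset.mem_univ, if_true]
    exact Finset.sum_congr rfl fun i _ => by ring
  obtain ⟨i, hi⟩ : ∃ i, b.repr x i ≠ 0 := by
    by_contra! h
    exact hx (b.ext_elem fun i => by simp [h i])
  rw [hexp]
  exact Finset.sum_pos' (fun j _ => by have := hc j; positivity)
    ⟨i, Finset.mem_univ i, by have := hc i; positivity⟩

end PositiveBasis

section TensorPower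

variable {K M ι κ : Type*} [AddCommGroup M] [Fintype κ] [DecidableEq ι]

theorem PiTensorProduct.apply_basis_of_apply_tprod [CommRing K] [Module K M]
    {G : M →ₗ[K] M →ₗ[K] K} {Gk : (⨂[K] _ : κ, M) →ₗ[K] (⨂[K] _ : κ, M) →ₗ[K] K} {c : ι → K}
    (b : Basis ι K M)
    (hG : ∀ i j, G (b i) (b j) = if i = j then c i else 0)
    (hGk : ∀ v w, Gk (PiTensorProduct.tprod K v) (PiTensorProduct.tprod K w) = ∏ i, G (v i) (w i))
    (f g : κ → ι) :
    Gk (Basis.piTensorProduct (fun _ => b) f) (Basis.piTensorProduct (fun _ => b) g) =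
      if f = g then ∏ i, c (f i) else 0 := by
  simp only [Basis.piTensorProduct_apply, hGk, hG, Fintype.prod_ite_zero, funext_iff]

theorem PiTensorProduct.apply_self_pos_of_apply_tprod [Field K] [LinearOrder K]
    [IsStrictOrderedRing K] [Module K M] [Fintype ι] {G : M →ₗ[K] M →ₗ[K] K}
    {Gk : (⨂[K] _ : κ, M) →ₗ[K] (⨂[K] _ : κ, M) →ₗ[K] K} {c : ι → K} (b : Basis ι K M)
    (hc : ∀ i, 0 < c i) (hG : ∀ i j, G (b i) (b j) = if i = j then c i else 0)
    (hGk : ∀ v w, Gk (PiTensorProduct.tprod K v) (PiTensorProduct.tprod K w) = ∏ i, G (v i) (w i))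
    {t : ⨂[K] _ : κ, M} (ht : t ≠ 0) : 0 < Gk t t := by
  classical
  exact LinearMap.apply_self_pos_of_basis (Basis.piTensorProduct fun _ => b)
    (fun f => Finset.prod_pos fun i _ => hc (f i)) (apply_basis_of_apply_tprod b hG hGk) ht

end TensorPower

theorem exists_symm_posDef_invariant {K M : Type*} [Field K] [LinearOrder K]
    [IsStrictOrderedRing K] [AddCommGroup M] [Module K M] [FiniteDimensional K M] {J : M →ₗ[K] M}
    (hJ : ∀ x, J (J x) = -x) :
    ∃ g : M →ₗ[K] M →ₗ[K] K, (∀ x y, g x y = g y x) ∧ (∀ x, x ≠ 0 → 0 < g x x) ∧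
      ∀ x y, g (J x) (J y) = g x y := by
  set b := Module.finBasis K M
  have hb : ∀ i j, b.toDual (b i) (b j) = if i = j then 1 else 0 := b.toDual_apply
  have hsymm : ∀ x y, b.toDual x y = b.toDual y x := LinearMap.congr_fun₂
    (show b.toDual = b.toDual.flip from LinearMap.ext_basis b b fun i j => by simp [hb, eq_comm])
  have hpos : ∀ x, x ≠ 0 → 0 < b.toDual x x := fun x =>
    LinearMap.apply_self_pos_of_basis b (fun _ => one_pos) hb
  refine ⟨b.toDual + b.toDual.compl₁₂ J J, fun x y => ?_, fun x hx => ?_, fun x y => ?_⟩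
  · simp [hsymm x y, hsymm (J x)]
  · have hJx : J x ≠ 0 := fun h => hx (by simpa [h] using (hJ x).symm)
    simpa using add_pos (hpos x hx) (hpos (J x) hJx)
  · simp [hJ, add_comm]

abbrev LinearMap.toInnerProductSpaceCore {V : Type*} [AddCommGroup V] [Module ℝ V]
    (g : V →ₗ[ℝ] V →ₗ[ℝ] ℝ) (hsymm : ∀ x y, g x y = g y x) (hpos : ∀ x, x ≠ 0 → 0 < g x x) :
    InnerProductSpace.Core ℝ V where
  inner x y := g x y
  conj_inner_symm x y := hsymm y x
  re_inner_nonneg x := by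
    by_cases hx : x = 0
    · simp [hx]
    · exact (hpos x hx).le
  add_left x y z := by simp
  smul_left x y r := by simp
  definite x hx := by
    by_contra h
    exact (hpos x h).ne' hx

section InnerProductSpace

variable {V : Type*} [NormedAddCommGroup V] [InnerProductSpace ℝ V] [FiniteDimensional ℝ V]
  (B : V →ₗ[ℝ] V →ₗ[ℝ] ℝ)

noncomputable def LinearMap.representingOperator : V →ₗ[ℝ] V :=
  InnerProductSpace.continuousLinearMapOfBilin B.toContinuousBilinearMap

theorem LinearMap.inner_representingOperator (x y : V) :
    ⟪B.representingOperator x, y⟫ = B x y :=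
  InnerProductSpace.continuousLinearMapOfBilin_apply _ x y

theorem LinearMap.isSymmetric_representingOperator (hB : ∀ x y, B x y = B y x) :
    B.representingOperator.IsSymmetric := fun x y => by
  rw [inner_representingOperator, real_inner_comm, inner_representingOperator, hB]

theorem LinearMap.commute_representingOperator {J : V →ₗ[ℝ] V} (hJ : Function.Surjective J)
    (hJinner : ∀ x y, ⟪J x, J y⟫ = ⟪x, y⟫) (hJB : ∀ x y, B (J x) (J y) = B x y) :
    Commute J B.representingOperator := LinearMap.ext fun x => ext_inner_right ℝ fun y => by
  obtain ⟨z, rfl⟩ := hJ y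
  simp only [Module.End.mul_apply, hJinner, inner_representingOperator, hJB]

theorem exists_isometry_commute_orthogonal_basis_of_inner (hBsymm : ∀ x y, B x y = B y x)
    (hBnd : ∀ x, (∀ y, B x y = 0) → x = 0) {J : V →ₗ[ℝ] V} (hJ : Function.Surjective J)
    (hJinner : ∀ x y, ⟪J x, J y⟫ = ⟪x, y⟫) (hJB : ∀ x y, B (J x) (J y) = B x y) :
    ∃ σ : V →ₗ[ℝ] V, (∀ x y, B (σ x) (σ y) = B x y) ∧ Commute J σ ∧
      ∃ (n : ℕ) (b : Basis (Fin n) ℝ V) (c : Fin n → ℝ), (∀ i, 0 < c i) ∧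
        ∀ i j, B (b i) (σ (b j)) = if i = j then c i else 0 := by
  have hS := B.isSymmetric_representingOperator hBsymm
  set b := (hS.eigenvectorBasis rfl).toBasis
  set μ := hS.eigenvalues rfl
  have hSb : ∀ i, B.representingOperator (b i) = μ i • b i := fun i => by
    simp [b, μ, hS.apply_eigenvectorBasis]
  have hBb : ∀ i j, B (b i) (b j) = if i = j then μ i else 0 := fun i j => by
    rw [← B.inner_representingOperator, hSb, real_inner_smul_left, OrthonormalBasis.coe_toBasis,
      orthonormal_iff_ite.mp (hS.eigenvectorBasis rfl).orthonormal]
    split_ifs <;> simp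
  have hμ : ∀ i, μ i ≠ 0 := fun i hi => b.ne_zero i <| hBnd _ fun y => by
    rw [← B.inner_representingOperator, hSb, hi, zero_smul, inner_zero_left]
  exact ⟨b.signDiagonal μ, b.apply_signDiagonal_signDiagonal hBb,
    b.commute_diagonal_comp hSb _ (B.commute_representingOperator hJ hJinner hJB),
    _, b, fun i => |μ i|, fun i => abs_pos.mpr (hμ i), b.apply_basis_signDiagonal_basis hBb⟩

end InnerProductSpace

theorem exists_isometry_commute_orthogonal_basis {V : Type*} [AddCommGroup V] [Module ℝ V]
    [FiniteDimensional ℝ V] (B : V →ₗ[ℝ] V →ₗ[ℝ] ℝ) {J : V →ₗ[ℝ] V}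
    (hBsymm : ∀ x y, B x y = B y x) (hBnd : ∀ x, (∀ y, B x y = 0) → x = 0)
    (hJ2 : ∀ x, J (J x) = -x) (hJB : ∀ x y, B (J x) (J y) = B x y) :
    ∃ σ : V →ₗ[ℝ] V, (∀ x y, B (σ x) (σ y) = B x y) ∧ Commute J σ ∧
      ∃ (n : ℕ) (b : Basis (Fin n) ℝ V) (c : Fin n → ℝ), (∀ i, 0 < c i) ∧
        ∀ i j, B (b i) (σ (b j)) = if i = j then c i else 0 := by
  obtain ⟨g, hg_symm, hg_pos, hgJ⟩ := exists_symm_posDef_invariant hJ2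
  let core := g.toInnerProductSpaceCore hg_symm hg_pos
  let : NormedAddCommGroup V := core.toNormedAddCommGroup
  let : InnerProductSpace ℝ V := .ofCore core.toCore
  have hJ : Function.Surjective J := fun y => ⟨-J y, by rw [map_neg, hJ2, neg_neg]⟩
  exact exists_isometry_commute_orthogonal_basis_of_inner B hBsymm hBnd hJ hgJ hJB

/-- Let `(V,⟨·,·⟩,J)` be a pseudo-Hermitian vector space and `Bk` the canonical extension
of the inner product `B` to `⊗^k V` (identified with `⊗^k V*` via `B`), characterized on
pure tensors by `Bk(v₁⊗···⊗v_k, w₁⊗···⊗w_k) = Π B(v_i,w_i)`.  If `ξ` is a subspace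
invariant under the (factor-wise) action of every isometry of `B` which commutes or
anticommutes with `J` (the group `𝒰*`), then `Bk` restricts to a nondegenerate form
on `ξ`. -/
theorem stmt_16 {V : Type*} [AddCommGroup V] [Module ℝ V] [FiniteDimensional ℝ V]
    (B : V →ₗ[ℝ] V →ₗ[ℝ] ℝ) (J : V →ₗ[ℝ] V)
    (hBsymm : ∀ x y, B x y = B y x)
    (hBnd : ∀ x, (∀ y, B x y = 0) → x = 0)
    (hJ2 : ∀ x, J (J x) = -x)
    (hJB : ∀ x y, B (J x) (J y) = B x y)
    (k : ℕ)
    (Bk : (⨂[ℝ] _ : Fin k, V) →ₗ[ℝ] (⨂[ℝ] _ : Fin k, V) →ₗ[ℝ] ℝ)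
    (hBk : ∀ v w : Fin k → V,
      Bk (PiTensorProduct.tprod ℝ v) (PiTensorProduct.tprod ℝ w) = ∏ i, B (v i) (w i))
    (ξ : Submodule ℝ (⨂[ℝ] _ : Fin k, V))
    (hinv : ∀ T : V →ₗ[ℝ] V, (∀ x y, B (T x) (T y) = B x y) →
      ((∀ x, T (J x) = J (T x)) ∨ (∀ x, T (J x) = - J (T x))) →
      ∀ t ∈ ξ, PiTensorProduct.map (fun _ : Fin k => T) t ∈ ξ) :
    ∀ t ∈ ξ, (∀ s ∈ ξ, Bk t s = 0) → t = 0 := by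
  obtain ⟨σ, hσB, hσJ, n, b, c, hc, hbσ⟩ :=
    exists_isometry_commute_orthogonal_basis B hBsymm hBnd hJ2 hJB
  intro t ht hperp
  by_contra hne
  have hσt : PiTensorProduct.map (fun _ => σ) t ∈ ξ :=
    hinv σ hσB (Or.inl fun x => (LinearMap.congr_fun hσJ x).symm) t ht
  have hpos := PiTensorProduct.apply_self_pos_of_apply_tprod (G := B.compl₂ σ)
    (Gk := Bk.compl₂ (PiTensorProduct.map fun _ => σ)) b hc hbσ
    (fun v w => by simp [PiTensorProduct.map_tprod, hBk]) hne
  exact hpos.ne' (hperp _ hσt)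
end
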